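/- arXiv:1010.3559 — 4 statements merged into one kernel-verified Lean document; each statement's English description precedes it below -/
import Mathlib

section
/- Let g: S¹ → S¹ be a homeomorphism of the circle without fixed points. Then there exist an integer n ≥ 3 and closed arcs I₁, …, Iₙ of S¹ whose union is S¹, such that any two distinct arcs Iⱼ and Iₖ intersect in at most a common endpoint, and g(Iⱼ) ∩ Iⱼ = ∅ for every j ∈ {1, …, n}. -/
noncomputable section

open Set Topology unitInterval

/-!
A fixed point free homeomorphism `g` of the compact circle moves every point by at least some
`ε > 0`. Cut the circle into `n ≥ 3` equal arcs with `1 / n < ε`. Each arc has diameter `1 / n`,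
so it misses its own image; two distinct arcs can only share an endpoint, and they cannot share
both endpoints because `n ≥ 3`.
-/

theorem exists_pos_le_dist_of_forall_ne {X E : Type*} [TopologicalSpace X] [CompactSpace X]
    [Nonempty X] [MetricSpace E] {f g : X → E} (hf : Continuous f) (hg : Continuous g)
    (hfg : ∀ x, f x ≠ g x) : ∃ ε > 0, ∀ x, ε ≤ dist (f x) (g x) := by
  obtain ⟨x₀, -, hx₀⟩ := isCompact_univ.exists_isMinOn univ_nonempty (hf.dist hg).continuousOn
  exact ⟨_, dist_pos.2 (hfg x₀), fun x => hx₀ (mem_univ x)⟩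

namespace AddCircle

theorem coe_eq_coe_iff_exists_int {a b : ℝ} :
    (a : AddCircle (1 : ℝ)) = b ↔ ∃ m : ℤ, a = b + m := by
  rw [← sub_eq_zero, ← coe_sub, coe_eq_zero_iff]
  simp [eq_comm, sub_eq_iff_eq_add']

theorem dist_coe_coe_le {p : ℝ} (a b : ℝ) : dist (a : AddCircle p) b ≤ |a - b| := by
  rw [dist_eq_norm, ← coe_sub]
  exact QuotientAddGroup.norm_mk_le_norm

end AddCircle

def equalArc (n j : ℕ) : C(I, AddCircle (1 : ℝ)) where
  toFun t := ((j + t : ℝ) / n : ℝ)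
  continuous_toFun := by fun_prop

@[simp]
theorem equalArc_apply (n j : ℕ) (t : I) : equalArc n j t = ((j + t : ℝ) / n : ℝ) := rfl

section equalArc

variable {n : ℕ}

theorem equalArc_eq_equalArc_iff (hn : 0 < n) {j k : ℕ} {s t : I} :
    equalArc n j s = equalArc n k t ↔ ∃ m : ℤ, (j + s : ℝ) = k + t + m * n := by
  have hn' : (n : ℝ) ≠ 0 := by positivity
  simp only [equalArc_apply, AddCircle.coe_eq_coe_iff_exists_int]
  refine exists_congr fun m => ?_
  rw [div_eq_iff hn', add_mul, div_mul_cancel₀ _ hn']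

theorem injective_equalArc (hn : 2 ≤ n) (j : ℕ) : Function.Injective (equalArc n j) := by
  intro s t hst
  obtain ⟨m, hm⟩ := (equalArc_eq_equalArc_iff (by omega)).1 hst
  have hm0 : m = 0 := by
    by_contra hm0
    have h1 : (1 : ℝ) ≤ |(m : ℝ)| := by exact_mod_cast Int.one_le_abs hm0
    have h2 : |(m : ℝ)| * n ≤ 1 := by
      rw [← Nat.abs_cast, ← abs_mul, show (m : ℝ) * n = s - t by linarith]
      exact abs_sub_le_of_nonneg_of_le s.2.1 s.2.2 t.2.1 t.2.2
    have h3 : (2 : ℝ) ≤ n := by exact_mod_cast hn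
    nlinarith
  subst hm0
  exact Subtype.ext (by simpa using hm)

theorem isEmbedding_equalArc (hn : 2 ≤ n) (j : ℕ) : IsEmbedding (equalArc n j) :=
  ((equalArc n j).continuous.isClosedEmbedding (injective_equalArc hn j)).isEmbedding

theorem iUnion_range_equalArc (hn : 0 < n) : ⋃ j : Fin n, range (equalArc n j) = univ := by
  refine eq_univ_of_forall fun z => ?_
  induction z using QuotientAddGroup.induction_on with | H r => ?_
  set x := n * Int.fract r
  have hx0 : 0 ≤ x := by positivity
  have hxn : x < n := by
    have := Int.fract_lt_one r
    have : (0 : ℝ) < n := by exact_mod_cast hn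
    nlinarith
  refine mem_iUnion.2 ⟨⟨⌊x⌋₊, (Nat.floor_lt hx0).2 hxn⟩,
    ⟨x - ⌊x⌋₊, sub_nonneg.2 (Nat.floor_le hx0), by linarith [Nat.lt_floor_add_one x]⟩, ?_⟩
  rw [equalArc_apply, ← AddCircle.coe_fract r]
  congr 1
  field_simp
  ring

theorem equalArc_eq_equalArc_of_le {j k : ℕ} (hj : j < n) (hk : k < n) (hjk : j ≠ k) {s t : I}
    (h : equalArc n j s = equalArc n k t) (hst : s ≤ t) :
    s = 0 ∧ t = 1 ∧ k + 1 ≡ j [MOD n] := by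
  obtain ⟨m, hm⟩ := (equalArc_eq_equalArc_iff (by omega)).1 h
  -- `d = t - s` is an integer in `[0, 1]`, and `d = 0` would force `j ≡ k [MOD n]`.
  obtain ⟨d, hd⟩ : ∃ d : ℤ, d = j - k - m * n := ⟨_, rfl⟩
  have hd_real : (d : ℝ) = t - s := by push_cast [hd]; linarith
  have hd0 : 0 ≤ d := by
    have : (0 : ℝ) ≤ d := by rw [hd_real]; exact sub_nonneg.2 hst
    exact_mod_cast this
  have hd1 : d ≤ 1 := by
    have : (d : ℝ) ≤ 1 := by rw [hd_real]; linarith [s.2.1, t.2.2]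
    exact_mod_cast this
  have hd_eq : d = 1 := by
    refine (eq_or_lt_of_le hd1).resolve_right fun hd_lt => hjk ?_
    refine Nat.ModEq.eq_of_lt_of_lt ?_ hj hk
    rw [← Int.natCast_modEq_iff, Int.modEq_iff_dvd]
    exact ⟨-m, by linear_combination hd - (by omega : d = 0)⟩
  have hts : (t : ℝ) - s = 1 := by rw [← hd_real, hd_eq, Int.cast_one]
  refine ⟨Icc.coe_eq_zero.1 (by linarith [s.2.1, t.2.2]),
    Icc.coe_eq_one.1 (by linarith [s.2.1, t.2.2]), ?_⟩
  rw [← Int.natCast_modEq_iff, Int.modEq_iff_dvd]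
  exact ⟨m, by push_cast; linear_combination hd_eq - hd⟩

theorem equalArc_eq_equalArc_of_ne {j k : ℕ} (hj : j < n) (hk : k < n) (hjk : j ≠ k) {s t : I}
    (h : equalArc n j s = equalArc n k t) :
    (s = 0 ∧ t = 1 ∧ k + 1 ≡ j [MOD n]) ∨ (s = 1 ∧ t = 0 ∧ j + 1 ≡ k [MOD n]) := by
  rcases le_total s t with hst | hts
  · exact Or.inl (equalArc_eq_equalArc_of_le hj hk hjk h hst)
  · obtain ⟨ht, hs, hkj⟩ := equalArc_eq_equalArc_of_le hk hj hjk.symm h.symm hts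
    exact Or.inr ⟨hs, ht, hkj⟩

theorem range_equalArc_inter_subset {j k : ℕ} (hj : j < n) (hk : k < n) (hjk : j ≠ k) :
    range (equalArc n j) ∩ range (equalArc n k) ⊆
      ({equalArc n j 0, equalArc n j 1} : Set _) ∩ {equalArc n k 0, equalArc n k 1} := by
  rintro _ ⟨⟨s, rfl⟩, t, hts⟩
  rcases equalArc_eq_equalArc_of_ne hj hk hjk hts.symm with ⟨rfl, rfl, -⟩ | ⟨rfl, rfl, -⟩
  · exact ⟨.inl rfl, .inr hts.symm⟩
  · exact ⟨.inr rfl, .inl hts.symm⟩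

theorem range_equalArc_inter_subsingleton (hn : 3 ≤ n) {j k : ℕ} (hj : j < n) (hk : k < n)
    (hjk : j ≠ k) : (range (equalArc n j) ∩ range (equalArc n k)).Subsingleton := by
  have key (h₁ : k + 1 ≡ j [MOD n]) (h₂ : j + 1 ≡ k [MOD n]) : False := by
    have : k + 2 ≡ k + 0 [MOD n] := (h₁.add_right 1).trans h₂
    have := Nat.le_of_dvd two_pos (Nat.modEq_zero_iff_dvd.1 (this.add_left_cancel' k))
    omega
  rintro _ ⟨⟨s, rfl⟩, t, hts⟩ _ ⟨⟨s', rfl⟩, t', hts'⟩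
  rcases equalArc_eq_equalArc_of_ne hj hk hjk hts.symm with ⟨rfl, -, h₁⟩ | ⟨rfl, -, h₁⟩ <;>
  rcases equalArc_eq_equalArc_of_ne hj hk hjk hts'.symm with ⟨rfl, -, h₂⟩ | ⟨rfl, -, h₂⟩
  · rfl
  · exact (key h₁ h₂).elim
  · exact (key h₂ h₁).elim
  · rfl

theorem dist_le_of_mem_range_equalArc (j : ℕ) {x y : AddCircle (1 : ℝ)}
    (hx : x ∈ range (equalArc n j)) (hy : y ∈ range (equalArc n j)) : dist x y ≤ 1 / n := by
  obtain ⟨s, rfl⟩ := hx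
  obtain ⟨t, rfl⟩ := hy
  calc dist (equalArc n j s) (equalArc n j t) ≤ |(j + s : ℝ) / n - (j + t) / n| :=
        AddCircle.dist_coe_coe_le _ _
    _ = |(s : ℝ) - t| / n := by rw [← sub_div, abs_div, Nat.abs_cast, add_sub_add_left_eq_sub]
    _ ≤ 1 / n := by
        gcongr
        exact abs_sub_le_of_nonneg_of_le s.2.1 s.2.2 t.2.1 t.2.2

end equalArc

/-- a fixed point free homeomorphism `g` of the circle admits a finite
decomposition of the circle into `n ≥ 3` closed arcs, any two distinct ones meeting in
at most a common endpoint, each arc being disjoint from its `g`-image. -/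
theorem stmt8 (g : AddCircle (1 : ℝ) ≃ₜ AddCircle (1 : ℝ)) (hg : ∀ x, g x ≠ x) :
    ∃ n : ℕ, 3 ≤ n ∧ ∃ e : Fin n → C(unitInterval, AddCircle (1 : ℝ)),
      (∀ j, Topology.IsEmbedding (e j)) ∧
      (⋃ j, Set.range (e j)) = Set.univ ∧
      (∀ j k, j ≠ k →
        Set.range (e j) ∩ Set.range (e k) ⊆ ({e j 0, e j 1} ∩ {e k 0, e k 1}) ∧
        (Set.range (e j) ∩ Set.range (e k)).Subsingleton) ∧
      (∀ j, (⇑g '' Set.range (e j)) ∩ Set.range (e j) = ∅) := by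
  obtain ⟨ε, hε, hgε⟩ := exists_pos_le_dist_of_forall_ne g.continuous continuous_id hg
  obtain ⟨m, hm⟩ := exists_nat_one_div_lt hε
  have hn : (1 : ℝ) / (m + 3 : ℕ) < ε :=
    lt_of_le_of_lt (by gcongr; push_cast; linarith) hm
  refine ⟨m + 3, by omega, fun j => equalArc (m + 3) j, fun j => isEmbedding_equalArc (by omega) j,
    iUnion_range_equalArc (by omega), fun j k hjk => ?_, fun j => ?_⟩
  · have hjk' : (j : ℕ) ≠ k := Fin.val_ne_of_ne hjk
    exact ⟨range_equalArc_inter_subset j.2 k.2 hjk',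
      range_equalArc_inter_subsingleton (by omega) j.2 k.2 hjk'⟩
  · refine eq_empty_iff_forall_notMem.2 ?_
    rintro _ ⟨⟨x, hx, rfl⟩, hgx⟩
    exact (hgε x).not_gt ((dist_le_of_mem_range_equalArc j hgx hx).trans_lt hn)
end
end

section
/- Let φ: ℝ → ℝ be an increasing homeomorphism such that φ(x+1) = φ(x) + 1 for every x ∈ ℝ and x < φ(x) < x + 1 for every x ∈ ℝ. Then there exists a strictly increasing sequence (aₙ)_{n∈ℤ} of real numbers with lim_{n→±∞} aₙ = ±∞, such that the set {aₙ : n ∈ ℤ} is invariant under translation by 1, and for every n ∈ ℤ one has aₙ₊₁ < φ(aₙ) ≤ aₙ₊₂ (equivalently: φ([aₙ, aₙ₊₁]) is disjoint from [aₙ, aₙ₊₁] but meets [aₙ₊₁, aₙ₊₂]). -/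
/-!
Let `n ≥ 1` be maximal with `φ^[n] x ≤ x + 1` for all `x`; it exists because an orbit of a
continuous map with `x < φ x` cannot converge, so it exceeds `x + 1`. Maximality gives `z` with
`z + 1 < φ^[n+1] z`; taking `y = φ z` and `x` slightly above `z` we get `x < y < φ x` and
`x + 1 < φ^[n] y`. The sequence is
`x < y < φ x < φ y < ⋯ < φ^[n-1] x < φ^[n-1] y < x + 1 < y + 1 < ⋯`,
i.e. `aₖ₊₂ = φ aₖ` except at the end of each period, where `φ^[n] ≤ id + 1` gives
`φ aₖ ≤ aₖ₊₂` and the choice of `x`, `y` gives `aₖ₊₁ < φ aₖ`.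
-/

open Set Filter Function

theorem exists_lt_iterate {α : Type*} [ConditionallyCompleteLinearOrder α] [TopologicalSpace α]
    [OrderTopology α] {f : α → α} (hf : Continuous f) (h : ∀ x, x < f x) (x c : α) :
    ∃ m, c < f^[m] x := by
  by_contra! hle
  have hmono : Monotone fun m => f^[m] x :=
    monotone_nat_of_le_succ fun m => by rw [iterate_succ_apply']; exact (h _).le
  have hfix := isFixedPt_of_tendsto_iterate
    (tendsto_atTop_ciSup hmono ⟨c, by rintro _ ⟨m, rfl⟩; exact hle m⟩) hf.continuousAt
  exact (h _).ne' hfix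

theorem exists_iterate_le_add_one_lt_iterate_succ {f : ℝ → ℝ} (hf : Continuous f)
    (h : ∀ x, x < f x ∧ f x < x + 1) :
    ∃ n, 0 < n ∧ (∀ x, f^[n] x ≤ x + 1) ∧ ∃ z, z + 1 < f^[n + 1] z := by
  classical
  have hex : ∃ m, ∃ z, z + 1 < f^[m] z := by
    obtain ⟨m, hm⟩ := exists_lt_iterate hf (fun x => (h x).1) 0 1
    exact ⟨m, 0, by rwa [zero_add]⟩
  have hfind_ne : ∀ m ≤ 1, Nat.find hex ≠ m := by
    intro m hm hfind
    obtain ⟨z, hz⟩ := hfind ▸ Nat.find_spec hex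
    interval_cases m
    · rw [iterate_zero_apply] at hz; linarith
    · simp only [iterate_one] at hz; linarith [(h z).2]
  obtain ⟨n, hn⟩ := Nat.exists_eq_add_one_of_ne_zero (hfind_ne 0 zero_le_one)
  refine ⟨n, Nat.pos_of_ne_zero fun h0 => hfind_ne 1 le_rfl (by rw [hn, h0]),
    fun x => not_lt.1 fun hx => Nat.find_min hex (by omega : n < Nat.find hex) ⟨x, hx⟩,
    hn ▸ Nat.find_spec hex⟩

theorem Int.exists_eq_mul_add {n : ℕ} (hn : 0 < n) (i : ℤ) : ∃ q : ℤ, ∃ j < n, i = n * q + j :=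
  have hn' : (0 : ℤ) < n := by exact_mod_cast hn
  ⟨i / n, (i % n).toNat, by have := Int.emod_lt_of_pos i hn'; omega, by
    have := Int.emod_nonneg i hn'.ne'; have := Int.mul_ediv_add_emod i n; omega⟩

theorem apply_mul_of_add_eq {b : ℤ → ℝ} {N : ℤ} (h : ∀ k, b (k + N) = b k + 1) (m : ℤ) :
    b (m * N) = b 0 + m := by
  simpa using AddConstMapClass.map_zsmul_const (⟨b, h⟩ : AddConstMap ℤ ℝ N 1) m

theorem Monotone.tendsto_atTop_atTop_of_add_eq {b : ℤ → ℝ} (hb : Monotone b) {N : ℤ}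
    (h : ∀ k, b (k + N) = b k + 1) : Tendsto b atTop atTop :=
  hb.tendsto_atTop_atTop fun c => ⟨⌈c - b 0⌉ * N, by
    rw [apply_mul_of_add_eq h]; linarith [Int.le_ceil (c - b 0)]⟩

theorem Monotone.tendsto_atBot_atBot_of_add_eq {b : ℤ → ℝ} (hb : Monotone b) {N : ℤ}
    (h : ∀ k, b (k + N) = b k + 1) : Tendsto b atBot atBot :=
  hb.tendsto_atBot_atBot fun c => ⟨⌊c - b 0⌋ * N, by
    rw [apply_mul_of_add_eq h]; linarith [Int.floor_le (c - b 0)]⟩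

def Int.interleave {α : Type*} (g h : ℤ → α) (k : ℤ) : α :=
  if Even k then g (k / 2) else h (k / 2)

@[simp] theorem Int.interleave_two_mul {α : Type*} (g h : ℤ → α) (i : ℤ) :
    Int.interleave g h (2 * i) = g i := by
  simp [Int.interleave]

@[simp] theorem Int.interleave_two_mul_add_one {α : Type*} (g h : ℤ → α) (i : ℤ) :
    Int.interleave g h (2 * i + 1) = h i := by
  have : ¬Even (2 * i + 1) := Int.not_even_iff_odd.2 (odd_two_mul_add_one i)
  simp only [Int.interleave, this, if_false]
  congr 1; omega

namespace CircleDeg1Lift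

variable (f : CircleDeg1Lift)

/-- `x, f x, …, f^[n-1] x, x + 1, f x + 1, …`: the orbit of `x`, restarted at the next integer
translate of `x` every `n` steps. -/
def twistedOrbit (n : ℕ) (x : ℝ) (i : ℤ) : ℝ :=
  f^[(i % n).toNat] x + (i / n : ℤ)

variable {n : ℕ}

theorem twistedOrbit_mul_add (x : ℝ) (q : ℤ) {j : ℕ} (hj : j < n) :
    f.twistedOrbit n x (n * q + j) = f^[j] x + q := by
  have hn : (n : ℤ) ≠ 0 := by omega
  have hj' : ((j : ℤ) / n) = 0 := Int.ediv_eq_zero_of_lt (by omega) (by omega)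
  have hmod : ((n : ℤ) * q + j) % n = j := by
    rw [Int.mul_add_emod_self_left]; exact Int.emod_eq_of_lt (by omega) (by omega)
  have hdiv : ((n : ℤ) * q + j) / n = q := by
    rw [Int.mul_add_ediv_left _ _ hn, hj', add_zero]
  simp [twistedOrbit, hmod, hdiv]

theorem twistedOrbit_add (hn : 0 < n) (x : ℝ) (i : ℤ) :
    f.twistedOrbit n x (i + n) = f.twistedOrbit n x i + 1 := by
  obtain ⟨q, j, hj, rfl⟩ := Int.exists_eq_mul_add hn i
  rw [show (n : ℤ) * q + j + n = n * (q + 1) + j by ring, twistedOrbit_mul_add _ _ _ hj,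
    twistedOrbit_mul_add _ _ _ hj]
  push_cast; ring

theorem map_twistedOrbit (x : ℝ) (i : ℤ) :
    f (f.twistedOrbit n x i) = f.twistedOrbit n (f x) i := by
  rw [twistedOrbit, twistedOrbit, map_add_int, ← iterate_succ_apply' f, iterate_succ_apply]

theorem twistedOrbit_lt_twistedOrbit (hf : StrictMono f) {x y : ℝ} (h : x < y) (i : ℤ) :
    f.twistedOrbit n x i < f.twistedOrbit n y i :=
  add_lt_add_left (hf.iterate _ h) _

theorem twistedOrbit_succ_cases (hn : 0 < n) (x y : ℝ) (i : ℤ) : ∃ q : ℤ,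
    (∃ j : ℕ, f.twistedOrbit n x (i + 1) = f^[j] x + q ∧ f (f.twistedOrbit n y i) = f^[j] y + q) ∨
    (f.twistedOrbit n x (i + 1) = x + 1 + q ∧ f (f.twistedOrbit n y i) = f^[n] y + q) := by
  obtain ⟨q, j, hj, rfl⟩ := Int.exists_eq_mul_add hn i
  rw [map_twistedOrbit, twistedOrbit_mul_add _ _ _ hj, ← iterate_succ_apply]
  rcases (Nat.succ_le_of_lt hj).lt_or_eq with hj' | hj'
  · refine ⟨q, .inl ⟨j + 1, ?_, rfl⟩⟩
    rw [show (n : ℤ) * q + j + 1 = n * q + (j + 1 : ℕ) by push_cast; ring,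
      twistedOrbit_mul_add _ _ _ hj']
  · refine ⟨q, .inr ⟨?_, by rw [← hj']⟩⟩
    rw [show (n : ℤ) * q + j + 1 = n * (q + 1) + (0 : ℕ) by rw [← hj']; push_cast; ring,
      twistedOrbit_mul_add _ _ _ hn, iterate_zero_apply]
    push_cast; ring

theorem twistedOrbit_succ_lt_map (hn : 0 < n) (hf : StrictMono f) {x y : ℝ} (hxy : x < y)
    (hwrap : x + 1 < f^[n] y) (i : ℤ) :
    f.twistedOrbit n x (i + 1) < f (f.twistedOrbit n y i) := by
  obtain ⟨q, ⟨j, hx, hy⟩ | ⟨hx, hy⟩⟩ := f.twistedOrbit_succ_cases hn x y i <;> rw [hx, hy]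
  · exact add_lt_add_left (hf.iterate j hxy) _
  · linarith

theorem map_twistedOrbit_le_succ (hn : 0 < n) {x : ℝ} (hx : f^[n] x ≤ x + 1) (i : ℤ) :
    f (f.twistedOrbit n x i) ≤ f.twistedOrbit n x (i + 1) := by
  obtain ⟨q, ⟨j, h₁, h₂⟩ | ⟨h₁, h₂⟩⟩ := f.twistedOrbit_succ_cases hn x x i <;> rw [h₁, h₂]
  linarith

theorem interleave_twistedOrbit_add (hn : 0 < n) (x y : ℝ) (k : ℤ) :
    Int.interleave (f.twistedOrbit n x) (f.twistedOrbit n y) (k + 2 * n) =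
      Int.interleave (f.twistedOrbit n x) (f.twistedOrbit n y) k + 1 := by
  obtain ⟨i, rfl | rfl⟩ := Int.even_or_odd' k
  · rw [← mul_add, Int.interleave_two_mul, Int.interleave_two_mul, twistedOrbit_add _ hn]
  · rw [show 2 * i + 1 + 2 * n = 2 * (i + n) + 1 by ring, Int.interleave_two_mul_add_one,
      Int.interleave_two_mul_add_one, twistedOrbit_add _ hn]

theorem interleave_twistedOrbit_lt_map_le (hn : 0 < n) (hf : StrictMono f) {x y : ℝ}
    (hxy : x < y) (hyx : y < f x) (hx : f^[n] x ≤ x + 1) (hy : f^[n] y ≤ y + 1)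
    (hwrap : x + 1 < f^[n] y) (k : ℤ) :
    let b := Int.interleave (f.twistedOrbit n x) (f.twistedOrbit n y)
    b (k + 1) < f (b k) ∧ f (b k) ≤ b (k + 2) := by
  dsimp only
  obtain ⟨i, rfl | rfl⟩ := Int.even_or_odd' k
  · rw [show 2 * i + 2 = 2 * (i + 1) by ring, Int.interleave_two_mul,
      Int.interleave_two_mul_add_one, Int.interleave_two_mul, map_twistedOrbit]
    exact ⟨f.twistedOrbit_lt_twistedOrbit hf hyx i,
      (f.map_twistedOrbit x i).symm.trans_le (f.map_twistedOrbit_le_succ hn hx i)⟩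
  · rw [show 2 * i + 1 + 1 = 2 * (i + 1) by ring, show 2 * i + 1 + 2 = 2 * (i + 1) + 1 by ring,
      Int.interleave_two_mul, Int.interleave_two_mul_add_one, Int.interleave_two_mul_add_one]
    exact ⟨f.twistedOrbit_succ_lt_map hn hf hxy hwrap i, f.map_twistedOrbit_le_succ hn hy i⟩

theorem exists_add_eq_add_one_lt_map_le (hf : StrictMono f) (hc : Continuous f)
    (h : ∀ x, x < f x ∧ f x < x + 1) :
    ∃ N : ℤ, ∃ b : ℤ → ℝ, (∀ k, b (k + N) = b k + 1) ∧
      ∀ k, b (k + 1) < f (b k) ∧ f (b k) ≤ b (k + 2) := by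
  obtain ⟨n, hn, hle, z, hz⟩ := exists_iterate_le_add_one_lt_iterate_succ hc h
  obtain ⟨x, hzx, hx⟩ := exists_between (lt_min (h z).1 (by linarith : z < f^[n + 1] z - 1))
  rw [lt_min_iff, iterate_succ_apply] at hx
  exact ⟨2 * n, _, f.interleave_twistedOrbit_add hn x (f z),
    f.interleave_twistedOrbit_lt_map_le hn hf hx.1 (hf hzx) (hle x) (hle _) (by linarith)⟩

end CircleDeg1Lift

/-- for an increasing homeomorphism `φ` of `ℝ` commuting with the unit
translation and satisfying `x < φ(x) < x + 1`, there is a strictly increasing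
bi-infinite sequence `(aₙ)` tending to `±∞`, whose set of values is invariant under the
unit translation, with `aₙ₊₁ < φ(aₙ) ≤ aₙ₊₂` for every `n`. -/
theorem stmt9 (φ : ℝ ≃ₜ ℝ) (hmono : StrictMono ⇑φ)
    (hper : ∀ x : ℝ, φ (x + 1) = φ x + 1)
    (hfree : ∀ x : ℝ, x < φ x ∧ φ x < x + 1) :
    ∃ a : ℤ → ℝ, StrictMono a ∧
      Filter.Tendsto a Filter.atTop Filter.atTop ∧
      Filter.Tendsto a Filter.atBot Filter.atBot ∧
      (∀ n : ℤ, a n + 1 ∈ Set.range a ∧ a n - 1 ∈ Set.range a) ∧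
      (∀ n : ℤ, a (n + 1) < φ (a n) ∧ φ (a n) ≤ a (n + 2)) := by
  let f : CircleDeg1Lift := ⟨⟨φ, hmono.monotone⟩, hper⟩
  obtain ⟨N, a, hN, ha⟩ := f.exists_add_eq_add_one_lt_map_le hmono φ.continuous hfree
  have hmono_a : StrictMono a := strictMono_int_of_lt_succ fun k => by
    obtain ⟨hlt, hle⟩ := ha (k - 1)
    rw [sub_add_cancel] at hlt
    rw [show k - 1 + 2 = k + 1 by ring] at hle
    exact hlt.trans_le hle
  refine ⟨a, hmono_a, hmono_a.monotone.tendsto_atTop_atTop_of_add_eq hN,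
    hmono_a.monotone.tendsto_atBot_atBot_of_add_eq hN,
    fun k => ⟨⟨k + N, hN k⟩, ⟨k - N, ?_⟩⟩, ha⟩
  rw [eq_sub_iff_add_eq, ← hN, sub_add_cancel]
end

section
/- Let h: A → A be a homeomorphism isotopic to the identity and let H: Ã → Ã be a lift of h. Suppose there exist an arc α̃ crossing Ã and a connected component W of Ã ∖ α̃ such that H(W) ⊆ W. Then either for every point z̃ ∈ Ã the sequence (p₁(Hⁿ(z̃)))_{n≥0} is bounded above, or for every point z̃ ∈ Ã the sequence (p₁(Hⁿ(z̃)))_{n≥0} is bounded below. -/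
noncomputable section

open Set MeasureTheory Topology Filter

attribute [local instance] MeasureTheory.Measure.Subtype.measureSpace

/-- The interval `[-1,1]`. -/
abbrev II : Set ℝ := Set.Icc (-1 : ℝ) 1

/-- The compact annulus `A = S¹ × [-1,1]`. -/
abbrev Ann : Type := AddCircle (1 : ℝ) × II

/-- The strip `Ã = ℝ × [-1,1]`, universal cover of the annulus. -/
abbrev Strip : Type := ℝ × II

/-- The covering map `Π : Ã → A`. -/
def pr : Strip → Ann := fun z => ((z.1 : AddCircle (1 : ℝ)), z.2)

/-- First coordinate projection `p₁ : Ã → ℝ`. -/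
def p1 : Strip → ℝ := fun z => z.1

/-- The deck transformation `τ(θ,r) = (θ+1,r)`. -/
def tauS : Strip → Strip := fun z => (z.1 + 1, z.2)

/-- The inclusion of the strip into the plane. -/
def iota : Strip → ℝ × ℝ := fun z => (z.1, (z.2 : ℝ))

def lo : II := ⟨-1, by norm_num⟩
def hi : II := ⟨1, by norm_num⟩

/-- The lower boundary circle `Bd⁻(A) = S¹ × {-1}`. -/
def bdMinusA : Set Ann := {z | z.2 = lo}
/-- The upper boundary circle `Bd⁺(A) = S¹ × {1}`. -/
def bdPlusA : Set Ann := {z | z.2 = hi}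
/-- The boundary of the annulus. -/
def bdA : Set Ann := bdMinusA ∪ bdPlusA

/-- The lower boundary line of the strip. -/
def bdMinusS : Set Strip := {z | z.2 = lo}
/-- The upper boundary line of the strip. -/
def bdPlusS : Set Strip := {z | z.2 = hi}
/-- The boundary of the strip. -/
def bdS : Set Strip := bdMinusS ∪ bdPlusS

/-- `H : Ã → Ã` is a lift of `h : A → A` when `Π ∘ H = h ∘ Π`. -/
def IsLift (H : Strip ≃ₜ Strip) (h : Ann ≃ₜ Ann) : Prop := ∀ z, pr (H z) = h (pr z)

/-- The fixed point set of a map. -/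
def fixedSet {X : Type*} (f : X → X) : Set X := {x | f x = x}

/-- A self-homeomorphism is isotopic to the identity if it can be joined to the identity
through homeomorphisms. -/
def IsotopicToId {X : Type*} [TopologicalSpace X] (h : X ≃ₜ X) : Prop :=
  ∃ F : C(unitInterval × X, X),
    (∀ t : unitInterval, ∃ g : X ≃ₜ X, ∀ x, F (t, x) = g x) ∧
    (∀ x, F (0, x) = x) ∧ (∀ x, F (1, x) = h x)

/-- A Jordan curve: a homeomorphic image of the circle. -/
def IsJordanCurve {X : Type*} [TopologicalSpace X] (J : Set X) : Prop :=
  ∃ e : C(AddCircle (1 : ℝ), X), Topology.IsEmbedding e ∧ Set.range e = J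

/-- An essential Jordan curve of the annulus: a Jordan curve which is not
null-homotopic in `A`. -/
def IsEssentialCurve (J : Set Ann) : Prop :=
  ∃ e : C(AddCircle (1 : ℝ), Ann), Topology.IsEmbedding e ∧ Set.range e = J ∧
    ∀ a : Ann, ¬ e.Homotopic (ContinuousMap.const _ a)

/-- An arc crossing the annulus `A`: a homeomorphic image of `[0,1]` joining the two
boundary circles and meeting the boundary only at its endpoints. -/
def IsCrossingArc (α : Set Ann) : Prop :=
  ∃ e : C(unitInterval, Ann), Topology.IsEmbedding e ∧ Set.range e = α ∧
    e 0 ∈ bdMinusA ∧ e 1 ∈ bdPlusA ∧ α ∩ bdA = {e 0, e 1}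

/-- An arc crossing the strip `Ã`. -/
def IsCrossingArcS (α : Set Strip) : Prop :=
  ∃ e : C(unitInterval, Strip), Topology.IsEmbedding e ∧ Set.range e = α ∧
    ((e 0 ∈ bdMinusS ∧ e 1 ∈ bdPlusS) ∨ (e 0 ∈ bdPlusS ∧ e 1 ∈ bdMinusS)) ∧
    α ∩ bdS = {e 0, e 1}

/-- The model rectangle `[0,1] × [-1,1]`. -/
abbrev Rect : Type := unitInterval × II

/-- `h(α)` does not meet the two local sides of the crossing arc `α`: in a suitable
chart around `α` sending `α` to the middle vertical segment, `h(α)` stays on one side. -/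
def AvoidsLocalSides (h : Ann ≃ₜ Ann) (α : Set Ann) : Prop :=
  ∃ N : Set Ann, α ⊆ interior N ∧ ∃ φ : N ≃ₜ Rect,
    ((fun x : N => φ x) '' {x : N | (x : Ann) ∈ α} = {q : Rect | (q.1 : ℝ) = 1/2}) ∧
    (((fun x : N => φ x) '' {x : N | (x : Ann) ∈ h '' α} ⊆ {q : Rect | 1/2 ≤ (q.1 : ℝ)}) ∨
     ((fun x : N => φ x) '' {x : N | (x : Ann) ∈ h '' α} ⊆ {q : Rect | (q.1 : ℝ) ≤ 1/2}))

/-- A subannulus of `A`: a subset homeomorphic to `A`. -/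
def IsSubannulus (B : Set Ann) : Prop := Nonempty (B ≃ₜ Ann)

/-- An essential subannulus: a subannulus containing an essential Jordan curve of `A`. -/
def IsEssentialSubannulus (B : Set Ann) : Prop :=
  IsSubannulus B ∧ ∃ J ⊆ B, IsEssentialCurve J


/-!
Let `M` bound `|p₁|` on the arc `α`. The half-strips `p₁ > M` and `p₁ < -M` are connected and
miss `α`, so each lies in a single component of `Ã ∖ α`. The component `W` cannot contain both,
since a path in `W` from the left half-strip to the right one would cross `α`. Nor can it contain
neither: `W` would then be bounded, so it could not meet `∂Ã` (from a point of `W` on a boundary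
line, the half-line of that line pointing away from the only point of `α` on it lies in `W`),
and its image in `ℂ` would be a bounded set with frontier in an arc, which is impossible because
an arc is a retract of the plane. Both planar facts are instances of the two-dimensional
Poincaré–Miranda theorem, proved with a continuous logarithm on the square.

Hence `W` contains, say, the right half-strip and lies in `p₁ ≥ -M`. A deck translation `τᵐ`
moves any `z` into `W`, `H` conjugates `τ` to `τ^{±1}`, and `H(W) ⊆ W`, so
`p₁(Hⁿ z) ≥ -M - |m|` for all `n`.
-/

open unitInterval Complex
open scoped Real

instance (a b : ℝ) : LocallyPathConnectedSpace (Icc a b) :=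
  (convex_Icc a b).locallyPathConnectedSpace

instance (a b : ℝ) : PreconnectedSpace (Icc a b) :=
  Subtype.preconnectedSpace isPreconnected_Icc

instance : ContractibleSpace I :=
  (convex_Icc 0 1).contractibleSpace ⟨0, unitInterval.zero_mem⟩

theorem Int.eq_of_lt_add_one_of_lt_add_one {k m : ℤ} (h₁ : (k : ℝ) < m + 1)
    (h₂ : (m : ℝ) < k + 1) : k = m := by
  have : k < m + 1 := by exact_mod_cast h₁
  have : m < k + 1 := by exact_mod_cast h₂
  omega

theorem exists_int_forall_mem_Icc {X : Type*} [TopologicalSpace X] [PreconnectedSpace X]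
    [Nonempty X] {u : X → ℝ} (hu : Continuous u) (a : ℝ)
    (h : ∀ x, ∃ k : ℤ, u x ∈ Icc (k + a) (k + a + 1 / 2)) :
    ∃ k : ℤ, ∀ x, u x ∈ Icc (k + a) (k + a + 1 / 2) := by
  obtain ⟨x₀⟩ := (inferInstance : Nonempty X)
  obtain ⟨k, hk⟩ := h x₀
  refine ⟨k, fun x => ?_⟩
  have hopen :
      u ⁻¹' Icc (k + a) (k + a + 1 / 2) = u ⁻¹' Ioo (k + a - 1 / 4) (k + a + 3 / 4) := by
    ext y
    obtain ⟨m, hm₁, hm₂⟩ := h y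
    refine ⟨fun ⟨hy₁, hy₂⟩ => ⟨by linarith, by linarith⟩, fun ⟨hy₁, hy₂⟩ => ?_⟩
    obtain rfl : m = k := Int.eq_of_lt_add_one_of_lt_add_one (by linarith) (by linarith)
    exact ⟨hm₁, hm₂⟩
  have hclopen : IsClopen (u ⁻¹' Icc (k + a) (k + a + 1 / 2)) :=
    ⟨isClosed_Icc.preimage hu, hopen ▸ isOpen_Ioo.preimage hu⟩
  exact (hclopen.eq_univ ⟨x₀, hk⟩).superset (mem_univ x)

theorem exists_int_mem_Icc_of_im_exp_nonneg {w : ℂ} (h : 0 ≤ (exp w).im) :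
    ∃ k : ℤ, w.im / (2 * π) ∈ Icc (k : ℝ) (k + 1 / 2) := by
  obtain ⟨k, hk⟩ := exp_eq_exp_iff_exists_int.mp (exp_log (exp_ne_zero w)).symm
  have him : w.im = arg (exp w) + 2 * π * k := by
    simpa [log_im, mul_comm, mul_assoc] using congrArg Complex.im hk
  have harg : 0 ≤ arg (exp w) := arg_nonneg_iff.mpr h
  refine ⟨k, ?_, ?_⟩
  · rw [le_div_iff₀ (by positivity)]; nlinarith [Real.pi_pos]
  · rw [div_le_iff₀ (by positivity)]; nlinarith [arg_le_pi (exp w), Real.pi_pos]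

theorem ContinuousMap.exists_exp_eq {X : Type*} [TopologicalSpace X] [SimplyConnectedSpace X]
    [LocallyPathConnectedSpace X] (F : C(X, ℂ)) (hF : ∀ x, F x ≠ 0) :
    ∃ g : C(X, ℂ), ∀ x, exp (g x) = F x := by
  obtain ⟨x₀⟩ := (inferInstance : Nonempty X)
  obtain ⟨g, ⟨-, hg⟩, -⟩ :=
    isCoveringMapOn_exp.existsUnique_continuousMap_lifts F (exp_log (hF x₀)) hF
  exact ⟨g, congrFun hg⟩

theorem exists_eq_zero_of_unitSquare (F : C(I × I, ℂ))
    (hL : ∀ t, (F (0, t)).re ≤ 0) (hR : ∀ t, 0 ≤ (F (1, t)).re)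
    (hB : ∀ s, (F (s, 0)).im ≤ 0) (hT : ∀ s, 0 ≤ (F (s, 1)).im) :
    ∃ p, F p = 0 := by
  by_contra! hF
  obtain ⟨g, hg⟩ := F.exists_exp_eq hF
  set u : I × I → ℝ := fun p => (g p).im / (2 * π)
  have hu : Continuous u := (continuous_im.comp g.continuous).div_const _
  -- On the edge `j` (top, right, bottom, left for `j = 0, 1, 2, 3`) the value `Iʲ F` lies in the
  -- closed upper half-plane, which traps `u` in `[k - j/4, k - j/4 + 1/2]` for a single `k`.
  -- Three corners force the four integers to agree; the fourth corner then cannot be matched.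
  have edge : ∀ (j : ℕ) (γ : I → I × I), Continuous γ →
      (∀ t, 0 ≤ (Complex.I ^ j * F (γ t)).im) →
      ∃ k : ℤ, ∀ t, u (γ t) ∈ Icc (k + -(j / 4 : ℝ)) (k + -(j / 4 : ℝ) + 1 / 2) := by
    intro j γ hγ hpos
    refine exists_int_forall_mem_Icc (hu.comp hγ) _ fun t => ?_
    have hrot : exp (g (γ t) + j * (π / 2 * Complex.I)) = Complex.I ^ j * F (γ t) := by
      rw [exp_add, exp_nat_mul, exp_pi_div_two_mul_I, hg, mul_comm]
    obtain ⟨k, hk₁, hk₂⟩ := exists_int_mem_Icc_of_im_exp_nonneg (hrot ▸ hpos t)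
    have him : (g (γ t) + j * (π / 2 * Complex.I)).im = (g (γ t)).im + j * (π / 2) := by simp
    have key : (g (γ t) + j * (π / 2 * Complex.I)).im / (2 * π) = u (γ t) + j / 4 := by
      change _ = (g (γ t)).im / (2 * π) + j / 4
      rw [him]
      field_simp
      ring
    rw [key] at hk₁ hk₂
    exact ⟨k, show u (γ t) ∈ _ from ⟨by linarith, by linarith⟩⟩
  obtain ⟨kT, hkT⟩ := edge 0 (fun s => (s, 1)) (by fun_prop) (by simpa using hT)
  obtain ⟨kR, hkR⟩ := edge 1 (fun t => (1, t)) (by fun_prop) (by simpa using hR)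
  obtain ⟨kB, hkB⟩ := edge 2 (fun s => (s, 0)) (by fun_prop) (by simpa [pow_succ] using hB)
  obtain ⟨kL, hkL⟩ := edge 3 (fun t => (0, t)) (by fun_prop) (by simpa [pow_succ] using hL)
  have hTR : kT = kR := by
    obtain ⟨h₁, h₂⟩ := hkT 1; obtain ⟨h₃, h₄⟩ := hkR 1
    exact Int.eq_of_lt_add_one_of_lt_add_one (by linarith) (by linarith)
  have hRB : kR = kB := by
    obtain ⟨h₁, h₂⟩ := hkR 0; obtain ⟨h₃, h₄⟩ := hkB 1
    exact Int.eq_of_lt_add_one_of_lt_add_one (by linarith) (by linarith)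
  have hBL : kB = kL := by
    obtain ⟨h₁, h₂⟩ := hkB 0; obtain ⟨h₃, h₄⟩ := hkL 0
    exact Int.eq_of_lt_add_one_of_lt_add_one (by linarith) (by linarith)
  subst hTR hRB hBL
  obtain ⟨h₁, h₂⟩ := hkL 1; obtain ⟨h₃, h₄⟩ := hkT 0
  linarith

theorem Path.exists_eq_of_crossing {a b c d : ℂ} (γ : Path a b) (δ : Path c d)
    (hre : ∀ t, a.re ≤ (δ t).re ∧ (δ t).re ≤ b.re)
    (him : ∀ s, c.im ≤ (γ s).im ∧ (γ s).im ≤ d.im) :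
    ∃ s t, γ s = δ t := by
  obtain ⟨p, hp⟩ := exists_eq_zero_of_unitSquare ⟨fun p => γ p.1 - δ (σ p.2), by fun_prop⟩
    (fun t => by simpa using (hre _).1) (fun t => by simpa using (hre _).2)
    (fun s => by simpa using (him s).2) (fun s => by simpa using (him s).1)
  exact ⟨_, _, sub_eq_zero.mp hp⟩

theorem ContinuousMap.exists_leftInverse_of_injective {Y : Type*} [TopologicalSpace Y]
    [T2Space Y] [NormalSpace Y] (γ : C(I, Y)) (hγ : Function.Injective γ) :
    ∃ r : C(Y, I), ∀ t, r (γ t) = t := by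
  have hγ' := γ.continuous.isClosedEmbedding hγ
  obtain ⟨r, hr⟩ := ContinuousMap.exists_restrict_eq hγ'.isClosed_range
    ⟨_, hγ'.isEmbedding.toHomeomorph.symm.continuous⟩
  exact ⟨r, fun t => by simpa using congrArg (· ⟨γ t, mem_range_self t⟩) hr⟩

theorem not_isBounded_of_frontier_subset_arc (γ : C(I, ℂ)) (hγ : Function.Injective γ)
    {W : Set ℂ} (hW : W.Nonempty) (hWγ : Disjoint W (range γ)) (hfr : frontier W ⊆ range γ) :
    ¬ Bornology.IsBounded W := by
  classical
  intro hb
  obtain ⟨z₀, hz₀⟩ := hW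
  obtain ⟨r, hr⟩ := γ.exists_leftInverse_of_injective hγ
  obtain ⟨R, hR⟩ := hb.subset_closedBall z₀
  -- `q` retracts `closure W` onto the arc and fixes everything else: it omits `z₀`, yet it is the
  -- identity on the boundary of a square around `z₀`.
  set q : ℂ → ℂ := (closure W).piecewise (γ ∘ r) id
  have hq : Continuous q := by
    refine Continuous.piecewise (fun z hz => ?_) (by fun_prop) continuous_id
    obtain ⟨t, rfl⟩ := hfr (frontier_closure_subset hz)
    simp [hr]
  have hq₀ : ∀ z, q z ≠ z₀ := by
    intro z hz
    by_cases hzW : z ∈ closure W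
    · simp only [q, piecewise_eq_of_mem _ _ _ hzW, Function.comp_apply] at hz
      exact hWγ.ne_of_mem hz₀ (mem_range_self _) hz.symm
    · simp only [q, piecewise_eq_of_notMem _ _ _ hzW, id] at hz
      exact hzW (hz ▸ subset_closure hz₀)
  have hq_far : ∀ z, R < |(z - z₀).re| ∨ R < |(z - z₀).im| → q z = z := by
    intro z hz
    have hzW : z ∉ closure W := fun hzW => by
      have := closure_minimal hR Metric.isClosed_closedBall hzW
      rw [Metric.mem_closedBall, dist_eq_norm] at this
      rcases hz with hz | hz
      · linarith [abs_re_le_norm (z - z₀)]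
      · linarith [abs_im_le_norm (z - z₀)]
    simp [q, hzW]
  set A : I × I → ℂ := fun p =>
    z₀ + ((R + 1) * (2 * p.1 - 1) : ℝ) + ((R + 1) * (2 * p.2 - 1) : ℝ) * Complex.I
  have hR₀ : 0 ≤ R := Metric.nonempty_closedBall.mp ⟨z₀, hR hz₀⟩
  have hre : ∀ p, (A p - z₀).re = (R + 1) * (2 * p.1 - 1) := fun p => by simp [A]
  have him : ∀ p, (A p - z₀).im = (R + 1) * (2 * p.2 - 1) := fun p => by simp [A]
  have hre_edge : ∀ s t : I, (s : ℝ) = 0 ∨ (s : ℝ) = 1 →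
      (q (A (s, t)) - z₀).re = (R + 1) * (2 * s - 1) := by
    intro s t hs
    rw [hq_far _ (.inl ?_), hre]
    rw [hre, lt_abs]
    rcases hs with hs | hs <;> rw [hs] <;> [right; left] <;> linarith
  have him_edge : ∀ s t : I, (t : ℝ) = 0 ∨ (t : ℝ) = 1 →
      (q (A (s, t)) - z₀).im = (R + 1) * (2 * t - 1) := by
    intro s t ht
    rw [hq_far _ (.inr ?_), him]
    rw [him, lt_abs]
    rcases ht with ht | ht <;> rw [ht] <;> [right; left] <;> linarith
  obtain ⟨p, hp⟩ := exists_eq_zero_of_unitSquare ⟨fun p => q (A p) - z₀, by fun_prop⟩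
    (fun t => (hre_edge 0 t (.inl rfl)).trans_le (by rw [Icc.coe_zero]; linarith))
    (fun t => le_of_le_of_eq (by rw [Icc.coe_one]; linarith) (hre_edge 1 t (.inr rfl)).symm)
    (fun s => (him_edge s 0 (.inl rfl)).trans_le (by rw [Icc.coe_zero]; linarith))
    (fun s => le_of_le_of_eq (by rw [Icc.coe_one]; linarith) (him_edge s 1 (.inr rfl)).symm)
  exact hq₀ _ (sub_eq_zero.mp hp)

theorem mem_connectedComponentIn_of_mem_closure {X : Type*} [TopologicalSpace X]
    [LocallyConnectedSpace X] {F : Set X} (hF : IsOpen F) {x y : X} (hy : y ∈ F)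
    (h : y ∈ closure (connectedComponentIn F x)) : y ∈ connectedComponentIn F x := by
  obtain ⟨z, hzy, hzx⟩ :=
    mem_closure_iff.mp h _ hF.connectedComponentIn (mem_connectedComponentIn hy)
  rw [connectedComponentIn_eq hzx, ← connectedComponentIn_eq hzy]
  exact mem_connectedComponentIn hy

theorem IsPreconnected.subset_connectedComponentIn_of_mem {X : Type*} [TopologicalSpace X]
    {S F : Set X} {x w : X} (hS : IsPreconnected S) (hSF : S ⊆ F) (hwS : w ∈ S)
    (hw : w ∈ _root_.connectedComponentIn F x) : S ⊆ _root_.connectedComponentIn F x := by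
  rw [connectedComponentIn_eq hw]
  exact hS.subset_connectedComponentIn hwS hSF

theorem IsCrossingArcS.exists_path {α : Set Strip} (hα : IsCrossingArcS α) :
    ∃ e : C(I, Strip), Function.Injective e ∧ range e = α ∧ (e 0).2 = lo ∧ (e 1).2 = hi ∧
      ∀ z ∈ α, (z.2 = lo → z = e 0) ∧ (z.2 = hi → z = e 1) := by
  have hlohi : lo ≠ hi := fun h => by norm_num [lo, hi] at h
  obtain ⟨e, he, rfl, hends, hbd⟩ := hα
  have hbd' : ∀ z ∈ range e, z.2 = lo ∨ z.2 = hi → z = e 0 ∨ z = e 1 := fun z hz hz' =>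
    hbd.subset ⟨hz, hz'⟩
  rcases hends with ⟨h0, h1⟩ | ⟨h0, h1⟩
  · refine ⟨e, he.injective, rfl, h0, h1, fun z hz => ⟨fun hz' => ?_, fun hz' => ?_⟩⟩
    · exact (hbd' z hz (.inl hz')).resolve_right fun h =>
        hlohi (hz'.symm.trans ((congrArg Prod.snd h).trans h1))
    · exact (hbd' z hz (.inr hz')).resolve_left fun h =>
        hlohi (hz'.symm.trans ((congrArg Prod.snd h).trans h0)).symm
  · refine ⟨e.comp ⟨σ, continuous_symm⟩, he.injective.comp symm_bijective.injective,
      symm_bijective.surjective.range_comp e, by simpa using h1.out, by simpa using h0.out,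
      fun z hz => ⟨fun hz' => ?_, fun hz' => ?_⟩⟩
    · simpa using (hbd' z hz (.inl hz')).resolve_left fun h =>
        hlohi (hz'.symm.trans ((congrArg Prod.snd h).trans h0))
    · simpa using (hbd' z hz (.inr hz')).resolve_right fun h =>
        hlohi (hz'.symm.trans ((congrArg Prod.snd h).trans h1)).symm

namespace Strip

def toComplex (z : Strip) : ℂ := ⟨z.1, z.2⟩

@[simp] theorem toComplex_im (z : Strip) : (toComplex z).im = z.2 := rfl

theorem toComplex_injective : Function.Injective toComplex := fun _ _ h =>
  Prod.ext (congrArg Complex.re h) (Subtype.ext (congrArg Complex.im h))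

theorem isClosedEmbedding_toComplex : IsClosedEmbedding toComplex :=
  Complex.equivRealProdCLM.toHomeomorph.symm.isClosedEmbedding.comp
    (IsClosedEmbedding.id.prodMap isClosed_Icc.isClosedEmbedding_subtypeVal)

@[fun_prop] theorem continuous_toComplex : Continuous toComplex :=
  isClosedEmbedding_toComplex.continuous

theorem isOpen_image_toComplex {W : Set Strip} (hW : IsOpen W)
    (hint : ∀ w ∈ W, (w.2 : ℝ) ∈ Ioo (-1) 1) : IsOpen (toComplex '' W) := by
  obtain ⟨O, hO, rfl⟩ := isClosedEmbedding_toComplex.isInducing.isOpen_iff.mp hW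
  convert hO.inter (isOpen_Ioo.preimage Complex.continuous_im) using 1
  ext z
  refine ⟨?_, fun ⟨hzO, hz⟩ => ⟨(z.re, ⟨z.im, Ioo_subset_Icc_self hz⟩), hzO, rfl⟩⟩
  rintro ⟨w, hw, rfl⟩
  exact ⟨hw, hint w hw⟩

def shift (m : ℤ) (z : Strip) : Strip := (z.1 + m, z.2)

@[simp] theorem p1_shift (m : ℤ) (z : Strip) : p1 (shift m z) = p1 z + m := rfl

@[simp] theorem shift_zero (z : Strip) : shift 0 z = z := by simp [shift]

theorem shift_shift (m n : ℤ) (z : Strip) : shift m (shift n z) = shift (m + n) z := by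
  simp only [shift, Int.cast_add, add_comm (m : ℝ), add_assoc]

@[fun_prop] theorem continuous_shift (m : ℤ) : Continuous (shift m) := by
  unfold shift; fun_prop

theorem pr_shift (m : ℤ) (z : Strip) : pr (shift m z) = pr z := by
  simp [pr, shift]

theorem exists_shift_one_eq_shift (E : Strip → Strip) (hE : Continuous E)
    (hper : ∀ z, pr (E (shift 1 z)) = pr (E z)) :
    ∃ c : ℤ, ∀ z, E (shift 1 z) = shift c (E z) := by
  set f : Strip → ℝ := fun z => p1 (E (shift 1 z)) - p1 (E z)
  have hf : Continuous f :=
    (continuous_fst.comp (hE.comp (continuous_shift 1))).sub (continuous_fst.comp hE)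
  have hmem : ∀ z, f z ∈ AddSubgroup.zmultiples (1 : ℝ) := fun z =>
    QuotientAddGroup.eq_iff_sub_mem.mp (congrArg Prod.fst (hper z))
  have hdisc : IsDiscrete (AddSubgroup.zmultiples (1 : ℝ) : Set ℝ) :=
    isDiscrete_iff_discreteTopology.mpr (NormedSpace.discreteTopology_zmultiples 1)
  obtain ⟨c, hc⟩ := AddSubgroup.mem_zmultiples_iff.mp (hmem (0, lo))
  refine ⟨c, fun z => Prod.ext ?_ (congrArg Prod.snd (hper z) :)⟩
  have := isPreconnected_univ.constant_of_mapsTo hdisc hf.continuousOn (fun z _ => hmem z)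
    (mem_univ z) (mem_univ (0, lo))
  simp only [f, zsmul_eq_mul, mul_one] at this hc
  change p1 (E (shift 1 z)) = p1 (E z) + c
  linarith

theorem apply_shift_of_apply_shift_one {E : Strip → Strip} {c : ℤ}
    (hc : ∀ z, E (shift 1 z) = shift c (E z)) (m : ℤ) (z : Strip) :
    E (shift m z) = shift (m * c) (E z) := by
  induction m using Int.induction_on generalizing z with
  | zero => simp
  | succ m ih =>
    rw [add_comm, ← shift_shift, hc, ih, shift_shift]
    congr 1; ring
  | pred m ih =>
    have h₁ : shift 1 (shift (-m - 1) z) = shift (-m) z := by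
      rw [shift_shift]; congr 1; ring
    calc E (shift (-m - 1) z) = shift (-c) (shift c (E (shift (-m - 1) z))) := by
          rw [shift_shift, neg_add_cancel, shift_zero]
      _ = shift ((-m - 1) * c) (E z) := by
          rw [← hc, h₁, ih, shift_shift]; congr 1; ring

theorem exists_lt_abs_p1_of_snd_eq {α : Set Strip} {x₀ w a : Strip}
    (hw : w ∈ connectedComponentIn αᶜ x₀) (ha : ∀ z ∈ α, z.2 = w.2 → z = a) (M : ℝ) :
    ∃ z ∈ connectedComponentIn αᶜ x₀, M < |p1 z| := by
  have hwα : w ∉ α := connectedComponentIn_subset _ _ hw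
  rcases le_or_gt (p1 a) (p1 w) with h | h
  · have hray : Ici (p1 w) ×ˢ {w.2} ⊆ connectedComponentIn αᶜ x₀ := by
      refine (isPreconnected_Ici.prod isPreconnected_singleton).subset_connectedComponentIn_of_mem
        ?_ ⟨mem_Ici.mpr le_rfl, rfl⟩ hw
      rintro z ⟨hz₁, hz₂⟩ hzα
      obtain rfl := ha z hzα hz₂
      exact hwα (Prod.ext (le_antisymm h hz₁) hz₂ ▸ hzα)
    refine ⟨(max (p1 w) (|M| + 1), w.2), hray ⟨mem_Ici.mpr (le_max_left _ _), rfl⟩,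
      lt_abs.mpr (.inl ?_)⟩
    change M < max (p1 w) (|M| + 1)
    linarith [le_max_right (p1 w) (|M| + 1), le_abs_self M]
  · have hray : Iic (p1 w) ×ˢ {w.2} ⊆ connectedComponentIn αᶜ x₀ := by
      refine (isPreconnected_Iic.prod isPreconnected_singleton).subset_connectedComponentIn_of_mem
        ?_ ⟨mem_Iic.mpr le_rfl, rfl⟩ hw
      rintro z ⟨hz₁, hz₂⟩ hzα
      obtain rfl := ha z hzα hz₂
      exact (lt_irrefl _) (h.trans_le hz₁)
    refine ⟨(min (p1 w) (-|M| - 1), w.2), hray ⟨mem_Iic.mpr (min_le_left _ _), rfl⟩,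
      lt_abs.mpr (.inr ?_)⟩
    change M < -min (p1 w) (-|M| - 1)
    linarith [min_le_right (p1 w) (-|M| - 1), le_abs_self M]

theorem not_joinedIn_compl_range {e : C(I, Strip)} (he0 : (e 0).2 = lo) (he1 : (e 1).2 = hi)
    {wl wr : Strip} (hl : ∀ t, p1 wl ≤ p1 (e t)) (hr : ∀ t, p1 (e t) ≤ p1 wr) :
    ¬ JoinedIn (range e)ᶜ wl wr := by
  intro hj
  let δ : Path (e 0) (e 1) := ⟨e, rfl, rfl⟩
  obtain ⟨s, t, hst⟩ := Path.exists_eq_of_crossing (hj.somePath.map continuous_toComplex)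
    (δ.map continuous_toComplex) (fun t => ⟨hl t, hr t⟩) fun s => by
      simp only [Path.map_coe, Function.comp_apply, toComplex_im, he0, he1, lo, hi]
      exact (hj.somePath s).2.2
  exact hj.somePath_mem s (toComplex_injective hst ▸ mem_range_self t)

theorem exists_lt_abs_p1 {e : C(I, Strip)} (he : Function.Injective e)
    (hbd : ∀ z ∈ range e, (z.2 = lo → z = e 0) ∧ (z.2 = hi → z = e 1))
    {x₀ : Strip} (hx₀ : x₀ ∉ range e) (M : ℝ) :
    ∃ w ∈ connectedComponentIn (range e)ᶜ x₀, M < |p1 w| := by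
  by_contra! hW
  set W := connectedComponentIn (range e)ᶜ x₀
  have hopen : IsOpen (range e)ᶜ := (isCompact_range e.continuous).isClosed.isOpen_compl
  have hint : ∀ w ∈ W, (w.2 : ℝ) ∈ Ioo (-1) 1 := by
    intro w hw
    have hline (a : Strip) (ha : ∀ z ∈ range e, z.2 = w.2 → z = a) : False := by
      obtain ⟨z, hz, hzM⟩ := exists_lt_abs_p1_of_snd_eq hw ha M
      exact (hW z hz).not_gt hzM
    refine ⟨w.2.2.1.lt_of_ne fun h => hline (e 0) fun z hz hzw => (hbd z hz).1 ?_,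
      w.2.2.2.lt_of_ne fun h => hline (e 1) fun z hz hzw => (hbd z hz).2 ?_⟩
    · exact hzw.trans (Subtype.ext h.symm)
    · exact hzw.trans (Subtype.ext h)
  refine not_isBounded_of_frontier_subset_arc (W := toComplex '' W) ⟨toComplex ∘ e, by fun_prop⟩
    (toComplex_injective.comp he) ⟨_, x₀, mem_connectedComponentIn hx₀, rfl⟩ ?_ ?_ ?_
  · rw [Set.disjoint_left]
    rintro _ ⟨w, hw, rfl⟩ ⟨t, ht⟩
    exact connectedComponentIn_subset _ _ hw (toComplex_injective ht ▸ mem_range_self t)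
  · rw [(isOpen_image_toComplex hopen.connectedComponentIn hint).frontier_eq,
      isClosedEmbedding_toComplex.closure_image_eq]
    rintro _ ⟨⟨w, hw, rfl⟩, hwW⟩
    by_contra hwe
    refine hwW ⟨w, mem_connectedComponentIn_of_mem_closure hopen ?_ hw, rfl⟩
    rintro ⟨t, rfl⟩
    exact hwe ⟨t, rfl⟩
  · exact ((isCompact_Icc.prod isCompact_univ).image continuous_toComplex).isBounded.subset
      (image_mono fun w hw => ⟨abs_le.mp (hW w hw), mem_univ _⟩)

theorem connectedComponentIn_compl_range_cases {e : C(I, Strip)} (he : Function.Injective e)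
    (he0 : (e 0).2 = lo) (he1 : (e 1).2 = hi)
    (hbd : ∀ z ∈ range e, (z.2 = lo → z = e 0) ∧ (z.2 = hi → z = e 1))
    {x₀ : Strip} (hx₀ : x₀ ∉ range e) {M : ℝ} (hM : ∀ t, |p1 (e t)| ≤ M) :
    ((∀ z, M < p1 z → z ∈ connectedComponentIn (range e)ᶜ x₀) ∧
        ∀ w ∈ connectedComponentIn (range e)ᶜ x₀, -M ≤ p1 w) ∨
      ((∀ z, p1 z < -M → z ∈ connectedComponentIn (range e)ᶜ x₀) ∧
        ∀ w ∈ connectedComponentIn (range e)ᶜ x₀, p1 w ≤ M) := by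
  set W := connectedComponentIn (range e)ᶜ x₀
  have hWo : IsOpen W := (isCompact_range e.continuous).isClosed.isOpen_compl.connectedComponentIn
  have hW : IsPathConnected W := hWo.isConnected_iff_isPathConnected.mp
    ⟨⟨x₀, mem_connectedComponentIn hx₀⟩, isPreconnected_connectedComponentIn⟩
  have hhalf {S : Set Strip} (hS : IsPreconnected S) (hSe : ∀ z ∈ S, M < |p1 z|) {w : Strip}
      (hwS : w ∈ S) (hwW : w ∈ W) : S ⊆ W :=
    hS.subset_connectedComponentIn_of_mem
      (fun z hz ⟨t, ht⟩ => (hSe z hz).not_ge (ht ▸ hM t)) hwS hwW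
  by_cases hR : ∃ w ∈ W, M < p1 w
  · obtain ⟨wr, hwr, hwrM⟩ := hR
    refine .inl ⟨fun z hz => hhalf (isPreconnected_Ioi.prod isPreconnected_univ)
      (fun z hz => lt_abs.mpr (.inl hz.1)) ⟨hwrM, mem_univ _⟩ hwr ⟨hz, mem_univ _⟩, ?_⟩
    intro wl hwl
    by_contra! hwlM
    refine not_joinedIn_compl_range he0 he1 (fun t => ?_) (fun t => ?_)
      ((hW.joinedIn wl hwl wr hwr).mono (connectedComponentIn_subset _ _))
    · linarith [(abs_le.mp (hM t)).1]
    · linarith [(abs_le.mp (hM t)).2]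
  · replace hR : ∀ w ∈ W, p1 w ≤ M := fun w hw => not_lt.mp fun h => hR ⟨w, hw, h⟩
    obtain ⟨wl, hwl, hwlM⟩ := exists_lt_abs_p1 he hbd hx₀ M
    have hwlM' : p1 wl < -M :=
      (lt_abs.mp hwlM).resolve_left (not_lt.mpr (hR wl hwl)) |> lt_neg_of_lt_neg
    exact .inr ⟨fun z hz => hhalf (isPreconnected_Iio.prod isPreconnected_univ)
      (fun z hz => lt_abs.mpr (.inr (lt_neg_of_lt_neg hz.1))) ⟨hwlM', mem_univ _⟩ hwl
      ⟨hz, mem_univ _⟩, hR⟩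

end Strip

open Strip

theorem IsLift.symm {H : Strip ≃ₜ Strip} {h : Ann ≃ₜ Ann} (hH : IsLift H h) :
    IsLift H.symm h.symm := fun z => by
  rw [← h.symm_apply_apply (pr (H.symm z)), ← hH, H.apply_symm_apply]

theorem IsLift.exists_apply_shift {H : Strip ≃ₜ Strip} {h : Ann ≃ₜ Ann} (hH : IsLift H h) :
    ∃ c : ℤ, |c| = 1 ∧ ∀ m z, H (shift m z) = shift (m * c) (H z) := by
  have hper {E : Strip ≃ₜ Strip} {g : Ann ≃ₜ Ann} (hE : IsLift E g) :
      ∃ c : ℤ, ∀ m z, E (shift m z) = shift (m * c) (E z) := by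
    obtain ⟨c, hc⟩ := exists_shift_one_eq_shift E E.continuous fun z => by
      rw [hE, hE, pr_shift]
    exact ⟨c, apply_shift_of_apply_shift_one hc⟩
  obtain ⟨c, hc⟩ := hper hH
  obtain ⟨c', hc'⟩ := hper hH.symm
  have hcc' : c * c' = 1 := by
    have h₁ : shift 1 ((0 : ℝ), lo) = shift (c * c') (0, lo) := by
      calc shift 1 ((0 : ℝ), lo) = H.symm (H (shift 1 (0, lo))) := (H.symm_apply_apply _).symm
        _ = shift (c * c') (0, lo) := by rw [hc, hc', one_mul, H.symm_apply_apply]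
    have h₂ := congrArg p1 h₁
    simp only [p1_shift, add_right_inj] at h₂
    exact_mod_cast h₂.symm
  exact ⟨c, by rcases Int.eq_one_or_neg_one_of_mul_eq_one hcc' with rfl | rfl <;> rfl, hc⟩

theorem IsLift.abs_p1_iterate_shift_sub {H : Strip ≃ₜ Strip} {h : Ann ≃ₜ Ann} (hH : IsLift H h)
    (n : ℕ) (m : ℤ) (z : Strip) : |p1 (H^[n] (shift m z)) - p1 (H^[n] z)| = |m| := by
  obtain ⟨c, hc₁, hc⟩ := hH.exists_apply_shift
  have hiter : ∀ n : ℕ, ∀ m z, H^[n] (shift m z) = shift (m * c ^ n) (H^[n] z) := by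
    intro n
    induction n with
    | zero => simp
    | succ n ih =>
      intro m z
      rw [Function.iterate_succ_apply', Function.iterate_succ_apply', ih, hc, pow_succ, mul_assoc]
  rw [hiter, p1_shift, add_sub_cancel_left, ← Int.cast_abs, abs_mul, abs_pow, hc₁, one_pow,
    mul_one, Int.cast_abs]

theorem IsLift.bddBelow_orbit {H : Strip ≃ₜ Strip} {h : Ann ≃ₜ Ann} (hH : IsLift H h)
    {W : Set Strip} (hWH : MapsTo H W W) {c : ℝ} (hW : ∀ w ∈ W, c ≤ p1 w) {z : Strip} {m : ℤ}
    (hm : shift m z ∈ W) : BddBelow (range fun n : ℕ => p1 (H^[n] z)) := by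
  refine ⟨c - |m|, ?_⟩
  rintro _ ⟨n, rfl⟩
  linarith [hW _ (hWH.iterate n hm), (abs_le.mp (hH.abs_p1_iterate_shift_sub n m z).le).2]

theorem IsLift.bddAbove_orbit {H : Strip ≃ₜ Strip} {h : Ann ≃ₜ Ann} (hH : IsLift H h)
    {W : Set Strip} (hWH : MapsTo H W W) {c : ℝ} (hW : ∀ w ∈ W, p1 w ≤ c) {z : Strip} {m : ℤ}
    (hm : shift m z ∈ W) : BddAbove (range fun n : ℕ => p1 (H^[n] z)) := by
  refine ⟨c + |m|, ?_⟩
  rintro _ ⟨n, rfl⟩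
  linarith [hW _ (hWH.iterate n hm), (abs_le.mp (hH.abs_p1_iterate_shift_sub n m z).le).1]

theorem stmt11_general (h : Ann ≃ₜ Ann)
    (H : Strip ≃ₜ Strip) (hH : IsLift H h)
    (αt : Set Strip) (hα : IsCrossingArcS αt)
    (W : Set Strip) (hW : ∃ x ∈ αtᶜ, W = connectedComponentIn αtᶜ x)
    (hHW : ⇑H '' W ⊆ W) :
    (∀ z : Strip, BddAbove (Set.range fun n : ℕ => p1 ((⇑H)^[n] z))) ∨
    (∀ z : Strip, BddBelow (Set.range fun n : ℕ => p1 ((⇑H)^[n] z))) := by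
  obtain ⟨e, he, rfl, he0, he1, hbd⟩ := hα.exists_path
  obtain ⟨x₀, hx₀, rfl⟩ := hW
  have hmaps := mapsTo_iff_image_subset.mpr hHW
  obtain ⟨M, hM⟩ := (isCompact_range (continuous_fst.comp e.continuous)).isBounded.exists_norm_le
  rcases connectedComponentIn_compl_range_cases he he0 he1 hbd hx₀ (M := M)
    (fun t => hM _ (mem_range_self t)) with ⟨hright, hWM⟩ | ⟨hleft, hWM⟩
  · refine .inr fun z => ?_
    obtain ⟨m, hm⟩ := exists_int_gt (M - p1 z)
    exact hH.bddBelow_orbit hmaps hWM (hright _ (by rw [p1_shift]; linarith))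
  · refine .inl fun z => ?_
    obtain ⟨m, hm⟩ := exists_int_lt (-M - p1 z)
    exact hH.bddAbove_orbit hmaps hWM (hleft _ (by rw [p1_shift]; linarith))

/-- if a lift `H` of `h` maps one of the two connected components `W`
of the complement of a crossing arc of the strip into itself, then either every forward
`H`-orbit is bounded on the right, or every forward `H`-orbit is bounded on the left. -/
theorem stmt11 (h : Ann ≃ₜ Ann) (hiso : IsotopicToId h)
    (H : Strip ≃ₜ Strip) (hH : IsLift H h)
    (αt : Set Strip) (hα : IsCrossingArcS αt)
    (W : Set Strip) (hW : ∃ x ∈ αtᶜ, W = connectedComponentIn αtᶜ x)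
    (hHW : ⇑H '' W ⊆ W) :
    (∀ z : Strip, BddAbove (Set.range fun n : ℕ => p1 ((⇑H)^[n] z))) ∨
    (∀ z : Strip, BddBelow (Set.range fun n : ℕ => p1 ((⇑H)^[n] z))) :=
  stmt11_general h H hH αt hα W hW hHW
end
end

section
/- Let H: Ã → Ã be a homeomorphism of the strip Ã = ℝ×[−1,1] preserving each of the two boundary lines ℝ×{−1} and ℝ×{1}. Define f: ℝ² → ℝ² by f(x,y) = H(x,y) for |y| ≤ 1 and f(x,y) = H(x, y/|y|) + (0, y − y/|y|) for |y| ≥ 1. Then f is a homeomorphism of ℝ² extending H (orientation-preserving if H is), and every connected component of Fix(f) is either unbounded or is a connected component of Fix(H) contained in ℝ × (−1,1). -/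
noncomputable section

open Set MeasureTheory Topology Filter

attribute [local instance] MeasureTheory.Measure.Subtype.measureSpace

/-!
Off the strip, `F` moves every point horizontally exactly as `H` moves the nearest boundary
point. An injective continuous self-map of `ℝ` with closed image is onto, so `H` maps each
boundary line onto itself and the extension of `H⁻¹` inverts `F`. A fixed point of `F` off the
open strip lies on a vertical ray of fixed points, so its component is unbounded; a component
inside the open strip is, through the closed embedding of the strip, a component of `Fix H`.

For the isotopy: conjugating `F` by the vertical translation by `s` and letting `s → ∞` slides
the strip away and deforms `F` into `(x, y) ↦ (v x, y)`, where `v` is `H` on the lower boundary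
line; when `v` is increasing, `x ↦ (1 - a) x + a v x` joins it to the identity.
-/

open Function

lemma Continuous.surjective_of_injective_of_isClosed_range {f : ℝ → ℝ} (hf : Continuous f)
    (hinj : Injective f) (hclosed : IsClosed (range f)) : Surjective f := by
  have hext : ∀ x, (∃ x', f x < f x') ∧ ∃ x', f x' < f x := by
    intro x
    rcases hf.strictMono_of_inj hinj with hm | ha
    · exact ⟨⟨x + 1, hm (lt_add_one x)⟩, ⟨x - 1, hm (sub_one_lt x)⟩⟩
    · exact ⟨⟨x - 1, ha (sub_one_lt x)⟩, ⟨x + 1, ha (lt_add_one x)⟩⟩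
  have hA : ¬ BddAbove (range f) := fun hb => by
    obtain ⟨x, hx⟩ := hclosed.csSup_mem (range_nonempty f) hb
    obtain ⟨x', hx'⟩ := (hext x).1
    exact (le_csSup hb (mem_range_self x')).not_gt (hx ▸ hx')
  have hB : ¬ BddBelow (range f) := fun hb => by
    obtain ⟨x, hx⟩ := hclosed.csInf_mem (range_nonempty f) hb
    obtain ⟨x', hx'⟩ := (hext x).2
    exact (csInf_le hb (mem_range_self x')).not_gt (hx ▸ hx')
  exact range_eq_univ.1 ((isPreconnected_range hf).eq_univ_of_unbounded hB hA)

lemma Topology.IsInducing.connectedComponentIn_eq_image {X Y : Type*} [TopologicalSpace X]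
    [TopologicalSpace Y] {e : X → Y} (he : IsInducing e) {S : Set Y} {x : X}
    (hrange : connectedComponentIn S (e x) ⊆ range e) :
    connectedComponentIn S (e x) = e '' connectedComponentIn (e ⁻¹' S) x := by
  by_cases hx : e x ∈ S
  swap
  · rw [connectedComponentIn_eq_empty hx,
      connectedComponentIn_eq_empty (show x ∉ e ⁻¹' S from hx), image_empty]
  refine Subset.antisymm ?_ ?_
  · have hpre : IsPreconnected (e ⁻¹' connectedComponentIn S (e x)) := by
      rw [← he.isPreconnected_image, image_preimage_eq_of_subset hrange]
      exact isPreconnected_connectedComponentIn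
    rw [← image_preimage_eq_of_subset hrange]
    exact image_mono <| hpre.subset_connectedComponentIn (mem_connectedComponentIn hx)
      (preimage_mono (connectedComponentIn_subset S _))
  · exact (isPreconnected_connectedComponentIn.image _ he.continuous.continuousOn)
      |>.subset_connectedComponentIn ⟨x, mem_connectedComponentIn hx, rfl⟩
      (image_subset_iff.2 (connectedComponentIn_subset _ _))

lemma not_isBounded_connectedComponentIn_of_vertical_subset {S : Set (ℝ × ℝ)} {x y : ℝ}
    {I : Set ℝ} (hI : IsPreconnected I) (hIb : ¬ Bornology.IsBounded I) (hy : y ∈ I)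
    (hS : {x} ×ˢ I ⊆ S) : ¬ Bornology.IsBounded (connectedComponentIn S (x, y)) := fun hb =>
  hIb <| (hb.subset <| (isPreconnected_singleton.prod hI).subset_connectedComponentIn
    (mk_mem_prod rfl hy) hS).snd_of_prod (singleton_nonempty x)

lemma OrderIso.strictMono_blendId (v : ℝ ≃o ℝ) {a : ℝ} (ha₀ : 0 ≤ a) (ha₁ : a ≤ 1) :
    StrictMono fun x => (1 - a) * x + a * v x := by
  intro x y hxy
  have hv := v.strictMono hxy
  rcases ha₁.lt_or_eq with ha | rfl
  · nlinarith [mul_le_mul_of_nonneg_left hv.le ha₀]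
  · simpa using hv

lemma OrderIso.surjective_blendId (v : ℝ ≃o ℝ) {a : ℝ} (ha₀ : 0 ≤ a) (ha₁ : a ≤ 1) :
    Surjective fun x => (1 - a) * x + a * v x := by
  refine Continuous.surjective (by fun_prop) ?_ ?_
  · refine tendsto_atTop_atTop.2 fun b => ⟨max b (v.symm b), fun x hx => ?_⟩
    have hb : b ≤ x := le_of_max_le_left hx
    have hvb : b ≤ v x := by simpa using v.monotone (le_of_max_le_right hx)
    nlinarith
  · refine tendsto_atBot_atBot.2 fun b => ⟨min b (v.symm b), fun x hx => ?_⟩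
    have hb : x ≤ b := le_of_le_min_left hx
    have hvb : v x ≤ b := by simpa using v.monotone (le_of_le_min_right hx)
    nlinarith

def OrderIso.blendId (v : ℝ ≃o ℝ) {a : ℝ} (ha₀ : 0 ≤ a) (ha₁ : a ≤ 1) : ℝ ≃o ℝ :=
  StrictMono.orderIsoOfSurjective _ (v.strictMono_blendId ha₀ ha₁) (v.surjective_blendId ha₀ ha₁)

namespace StripExtension

def clampII : ℝ → II := projIcc (-1) 1 (by norm_num)

lemma clampII_of_le_neg_one {y : ℝ} (hy : y ≤ -1) : clampII y = lo := projIcc_of_le_left _ hy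

lemma clampII_of_one_le {y : ℝ} (hy : 1 ≤ y) : clampII y = hi := projIcc_of_right_le _ hy

lemma clampII_coe (c : II) : clampII c = c := projIcc_val _ c

lemma div_abs_eq_clampII {y : ℝ} (hy : 1 ≤ |y|) : y / |y| = clampII y := by
  rcases le_abs'.1 hy with h | h
  · rw [abs_of_neg (by linarith), div_neg, div_self (by linarith), clampII_of_le_neg_one h]; rfl
  · rw [abs_of_pos (by linarith), div_self (by linarith), clampII_of_one_le h]; rfl

lemma iota_injective : Injective iota := by
  rintro ⟨x, y⟩ ⟨x', y'⟩ h
  simp_all [iota, Subtype.ext_iff]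

lemma isInducing_iota : IsInducing iota := IsInducing.id.prodMap IsInducing.subtypeVal

def PreservesLevel (H : Strip ≃ₜ Strip) (b : II) : Prop :=
  ∀ z : Strip, z.2 = b → (H z).2 = b

variable (H : Strip ≃ₜ Strip) {b : II}

def planeExt (q : ℝ × ℝ) : ℝ × ℝ :=
  iota (H (q.1, clampII q.2)) + ((0 : ℝ), q.2 - clampII q.2)

lemma continuous_planeExt : Continuous (planeExt H) := by
  have : Continuous clampII := continuous_projIcc
  unfold planeExt iota
  fun_prop

lemma planeExt_iota (w : Strip) : planeExt H (iota w) = iota (H w) := by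
  simp [planeExt, iota, clampII_coe]

lemma apply_boundary (hb : PreservesLevel H b) (x : ℝ) :
    H (x, b) = ((H (x, b)).1, b) :=
  Prod.ext rfl (hb _ rfl)

lemma planeExt_of_clampII_eq (hb : PreservesLevel H b) {x y : ℝ}
    (hy : clampII y = b) : planeExt H (x, y) = ((H (x, b)).1, y) := by
  simp [planeExt, iota, hy, hb (x, b) rfl]

lemma surjective_fst_apply_boundary (hb : PreservesLevel H b) :
    Surjective fun t : ℝ => (H (t, b)).1 := by
  refine Continuous.surjective_of_injective_of_isClosed_range (by fun_prop) ?_ ?_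
  · intro s t hst
    simpa using H.injective (Prod.ext hst ((hb _ rfl).trans (hb _ rfl).symm))
  · have hline : IsClosed {z : Strip | z.2 = b} := isClosed_eq continuous_snd continuous_const
    have : range (fun t : ℝ => (H (t, b)).1) =
        (fun x : ℝ => ((x, b) : Strip)) ⁻¹' (H '' {z | z.2 = b}) := by
      ext x
      constructor
      · rintro ⟨t, rfl⟩
        exact ⟨(t, b), rfl, apply_boundary H hb t⟩
      · rintro ⟨z, hz, hzx⟩
        refine ⟨z.1, ?_⟩
        show (H (z.1, b)).1 = x
        rw [show ((z.1, b) : Strip) = z from Prod.ext rfl hz.symm, hzx]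
    rw [this]
    exact (H.isClosedMap _ hline).preimage (by fun_prop)

lemma symm_apply_boundary (hb : PreservesLevel H b) :
    PreservesLevel H.symm b := by
  intro z hz
  obtain ⟨t, ht⟩ := surjective_fst_apply_boundary H hb z.1
  rw [show z = H (t, b) from Prod.ext ht.symm (hz.trans (hb _ rfl).symm), H.symm_apply_apply]

lemma planeExt_symm_planeExt (hbm : PreservesLevel H lo)
    (hbp : PreservesLevel H hi) (q : ℝ × ℝ) :
    planeExt H.symm (planeExt H q) = q := by
  have boundary : ∀ {b : II}, PreservesLevel H b → clampII q.2 = b →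
      planeExt H.symm (planeExt H q) = q := fun hb hq => by
    rw [planeExt_of_clampII_eq H hb hq, planeExt_of_clampII_eq H.symm (symm_apply_boundary H hb) hq,
      ← apply_boundary H hb, H.symm_apply_apply]
  rcases le_or_gt q.2 (-1) with h | h
  · exact boundary hbm (clampII_of_le_neg_one h)
  rcases le_or_gt 1 q.2 with h' | h'
  · exact boundary hbp (clampII_of_one_le h')
  obtain ⟨w, rfl⟩ : q ∈ range iota := ⟨(q.1, ⟨q.2, h.le, h'.le⟩), rfl⟩
  rw [planeExt_iota, planeExt_iota, H.symm_apply_apply]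

def planeHomeomorph (hbm : PreservesLevel H lo)
    (hbp : PreservesLevel H hi) : (ℝ × ℝ) ≃ₜ (ℝ × ℝ) where
  toFun := planeExt H
  invFun := planeExt H.symm
  left_inv := planeExt_symm_planeExt H hbm hbp
  right_inv q := by
    simpa using planeExt_symm_planeExt H.symm (symm_apply_boundary H hbm)
      (symm_apply_boundary H hbp) q
  continuous_toFun := continuous_planeExt H
  continuous_invFun := continuous_planeExt H.symm

lemma preimage_iota_fixedPoints :
    iota ⁻¹' {p | planeExt H p = p} = {w | H w = w} := by
  ext w
  simp only [mem_preimage, mem_ofPred_eq, planeExt_iota, iota_injective.eq_iff]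

lemma planeExt_eq_self_of_clampII_eq (hb : PreservesLevel H b) {x y y' : ℝ}
    (hy : clampII y = b) (hy' : clampII y' = b) (hfix : planeExt H (x, y) = (x, y)) :
    planeExt H (x, y') = (x, y') := by
  rw [planeExt_of_clampII_eq H hb hy] at hfix
  rw [planeExt_of_clampII_eq H hb hy', congrArg Prod.fst hfix]

lemma not_isBounded_connectedComponentIn_fixedPoints
    (hbm : PreservesLevel H lo) (hbp : PreservesLevel H hi)
    {p : ℝ × ℝ} (hp : planeExt H p = p) (hp₂ : p.2 ∉ Ioo (-1) 1) :
    ¬ Bornology.IsBounded (connectedComponentIn {q | planeExt H q = q} p) := by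
  obtain ⟨x, y⟩ := p
  have fixed_ray : ∀ {b : II} {I : Set ℝ}, PreservesLevel H b →
      IsPreconnected I → ¬ Bornology.IsBounded I → y ∈ I → (∀ y' ∈ I, clampII y' = b) →
      ¬ Bornology.IsBounded (connectedComponentIn {q | planeExt H q = q} (x, y)) :=
    fun hb hI hIb hy hIb' => not_isBounded_connectedComponentIn_of_vertical_subset hI hIb hy
      (by
        rintro ⟨_, y'⟩ ⟨rfl, hy'⟩
        exact planeExt_eq_self_of_clampII_eq H hb (hIb' y hy) (hIb' y' hy') hp)
  rcases le_or_gt y (-1) with h | h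
  · exact fixed_ray hbm isPreconnected_Iic (fun hB => not_bddBelow_Iic _ hB.bddBelow) h
      fun _ => clampII_of_le_neg_one
  · have h' : 1 ≤ y := not_lt.1 fun h' => hp₂ ⟨h, h'⟩
    exact fixed_ray hbp isPreconnected_Ici (fun hB => not_bddAbove_Ici _ hB.bddAbove) h'
      fun _ => clampII_of_one_le

def isotopyShift (t : ℝ) : ℝ := (t - 1 / 2)⁻¹ - 2

lemma tendsto_isotopyShift : Tendsto isotopyShift (𝓝[>] (1 / 2)) atTop := by
  have h : Tendsto (fun t : ℝ => t - 1 / 2) (𝓝[>] (1 / 2)) (𝓝[>] 0) :=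
    tendsto_nhdsWithin_of_tendsto_nhds_of_eventually_within _
      (((continuous_sub_right _).tendsto' _ _ (sub_self _)).mono_left nhdsWithin_le_nhds)
      (eventually_nhdsWithin_of_forall fun t ht => sub_pos.2 (mem_Ioi.1 ht))
  exact tendsto_atTop_add_const_right _ _ (tendsto_inv_nhdsGT_zero.comp h)

def isotopyLevel (t y : ℝ) : II := if t ≤ 1 / 2 then lo else clampII (y - isotopyShift t)

lemma continuous_isotopyLevel : Continuous fun w : ℝ × ℝ => isotopyLevel w.1 w.2 := by
  rw [continuous_iff_continuousAt]
  rintro ⟨t, y⟩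
  refine lt_trichotomy t (1 / 2) |>.elim3 (fun ht => ?_) (fun ht => ?_) (fun ht => ?_)
  · refine ContinuousAt.congr (f := fun _ => lo) continuousAt_const <| eventually_of_mem
      ((isOpen_lt continuous_fst continuous_const).mem_nhds ht) fun w hw => ?_
    exact (if_pos (le_of_lt hw)).symm
  · subst ht
    have hshift : ∀ᶠ t' in 𝓝 (1 / 2 : ℝ), t' ≤ 1 / 2 ∨ y + 2 ≤ isotopyShift t' := by
      rw [← nhdsLE_sup_nhdsGT, eventually_sup]
      exact ⟨eventually_nhdsWithin_of_forall fun _ => Or.inl,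
        (tendsto_isotopyShift.eventually_ge_atTop _).mono fun _ => Or.inr⟩
    refine ContinuousAt.congr (f := fun _ => lo) continuousAt_const ?_
    rw [nhds_prod_eq]
    filter_upwards [hshift.prod_mk (eventually_lt_nhds (lt_add_one y))] with w ⟨hw₁, hw₂⟩
    unfold isotopyLevel
    split_ifs with h
    · rfl
    · exact (clampII_of_le_neg_one (by linarith [hw₁.resolve_left h])).symm
  · have hcont : ContinuousAt (fun w : ℝ × ℝ => clampII (w.2 - isotopyShift w.1)) (t, y) := by
      have hshift : ContinuousAt isotopyShift t := by
        unfold isotopyShift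
        fun_prop (disch := linarith)
      exact continuous_projIcc.continuousAt.comp <| continuousAt_snd.sub <|
        ContinuousAt.comp (g := isotopyShift) (f := Prod.fst) hshift continuousAt_fst
    refine hcont.congr <| eventually_of_mem
      ((isOpen_lt continuous_const continuous_fst).mem_nhds ht) fun w hw => ?_
    exact (if_neg (not_le.2 hw)).symm

/-- For `t ≤ 1/2` the straight-line path from the identity to `(x, y) ↦ ((H (x, lo)).1, y)`; for
`t > 1/2` the extension of `H` conjugated by the vertical translation by `isotopyShift t`. -/
def isotopy (t : ℝ) (p : ℝ × ℝ) : ℝ × ℝ :=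
  ((1 - min (2 * t) 1) * p.1 + min (2 * t) 1 * (H (p.1, isotopyLevel t p.2)).1,
    (H (p.1, isotopyLevel t p.2)).2 + (p.2 - isotopyLevel t p.2))

lemma continuous_isotopy : Continuous fun w : ℝ × (ℝ × ℝ) => isotopy H w.1 w.2 := by
  have hlevel : Continuous fun w : ℝ × (ℝ × ℝ) => isotopyLevel w.1 w.2.2 :=
    continuous_isotopyLevel.comp (continuous_fst.prodMk continuous_snd.snd)
  unfold isotopy
  fun_prop

lemma isotopy_of_le_half (hbm : PreservesLevel H lo) {t : ℝ} (ht : t ≤ 1 / 2)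
    (p : ℝ × ℝ) : isotopy H t p = ((1 - 2 * t) * p.1 + 2 * t * (H (p.1, lo)).1, p.2) := by
  have hlevel : isotopyLevel t p.2 = lo := if_pos ht
  rw [isotopy, hlevel, min_eq_left (by linarith), hbm (p.1, lo) rfl,
    show ((lo : II) : ℝ) = -1 from rfl]
  ring_nf

lemma isotopy_of_half_lt {t : ℝ} (ht : 1 / 2 < t) (p : ℝ × ℝ) :
    isotopy H t p =
      planeExt H (p + -((0 : ℝ), isotopyShift t)) + ((0 : ℝ), isotopyShift t) := by
  have hlevel : isotopyLevel t p.2 = clampII (p.2 - isotopyShift t) := if_neg (not_le.2 ht)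
  rw [isotopy, hlevel, min_eq_right (by linarith)]
  ext
  · simp [planeExt, iota, ← sub_eq_add_neg]
  · simp [planeExt, iota, ← sub_eq_add_neg]
    ring

lemma isotopicToId_planeHomeomorph (hbm : PreservesLevel H lo)
    (hbp : PreservesLevel H hi) (hmono : StrictMono fun x => (H (x, lo)).1) :
    IsotopicToId (planeHomeomorph H hbm hbp) := by
  let v : ℝ ≃o ℝ :=
    StrictMono.orderIsoOfSurjective _ hmono (surjective_fst_apply_boundary H hbm)
  refine ⟨⟨fun w => isotopy H w.1 w.2,
    (continuous_isotopy H).comp (continuous_subtype_val.prodMap continuous_id)⟩,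
    fun t => ?_, fun p => ?_, fun p => ?_⟩
  · rcases le_or_gt (t : ℝ) (1 / 2) with ht | ht
    · have ht₀ : (0 : ℝ) ≤ 2 * t := by linarith [unitInterval.nonneg t]
      exact ⟨((v.blendId ht₀ (by linarith)).toHomeomorph).prodCongr (Homeomorph.refl ℝ),
        isotopy_of_le_half H hbm ht⟩
    · exact ⟨(Homeomorph.addRight _).trans
        ((planeHomeomorph H hbm hbp).trans (Homeomorph.addRight _)), isotopy_of_half_lt H ht⟩
  · show isotopy H 0 p = p
    simp [isotopy_of_le_half H hbm (by norm_num : (0 : ℝ) ≤ 1 / 2)]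
  · show isotopy H 1 p = planeExt H p
    norm_num [isotopy_of_half_lt H (by norm_num : (1 / 2 : ℝ) < 1), isotopyShift,
      Prod.mk_zero_zero]

lemma planeExt_of_mem (q : ℝ × ℝ) (hq : q.2 ∈ II) :
    planeExt H q = iota (H (q.1, ⟨q.2, hq⟩)) :=
  planeExt_iota H (q.1, ⟨q.2, hq⟩)

lemma planeExt_of_one_le_abs (q : ℝ × ℝ) (hq : 1 ≤ |q.2|) (hs : q.2 / |q.2| ∈ II) :
    planeExt H q = iota (H (q.1, ⟨q.2 / |q.2|, hs⟩)) + ((0 : ℝ), q.2 - q.2 / |q.2|) := by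
  rw [show (⟨q.2 / |q.2|, hs⟩ : II) = clampII q.2 from Subtype.ext (div_abs_eq_clampII hq),
    div_abs_eq_clampII hq]
  rfl

lemma connectedComponentIn_fixedPoints_unbounded_or_eq_image
    (hbm : PreservesLevel H lo) (hbp : PreservesLevel H hi)
    (q : ℝ × ℝ) (hq : planeExt H q = q) :
    ¬ Bornology.IsBounded (connectedComponentIn {p | planeExt H p = p} q) ∨
      ∃ z : Strip, H z = z ∧ iota z = q ∧ -1 < (z.2 : ℝ) ∧ (z.2 : ℝ) < 1 ∧
        connectedComponentIn {p | planeExt H p = p} q ⊆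
          {p : ℝ × ℝ | -1 < p.2 ∧ p.2 < 1} ∧
        connectedComponentIn {p | planeExt H p = p} q =
          iota '' connectedComponentIn {w : Strip | H w = w} z := by
  by_cases hC : connectedComponentIn {p | planeExt H p = p} q ⊆ {p | -1 < p.2 ∧ p.2 < 1}
  · obtain ⟨hq₁, hq₂⟩ := hC (mem_connectedComponentIn hq)
    obtain ⟨z, rfl⟩ : q ∈ range iota := ⟨(q.1, ⟨q.2, hq₁.le, hq₂.le⟩), rfl⟩
    have hz : H z = z := iota_injective ((planeExt_iota H z).symm.trans hq)
    refine Or.inr ⟨z, hz, rfl, hq₁, hq₂, hC, ?_⟩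
    rw [← preimage_iota_fixedPoints]
    exact isInducing_iota.connectedComponentIn_eq_image
      (hC.trans fun p hp => ⟨(p.1, ⟨p.2, hp.1.le, hp.2.le⟩), rfl⟩)
  · obtain ⟨p, hpC, hp⟩ := not_subset.1 hC
    rw [connectedComponentIn_eq hpC]
    exact Or.inl (not_isBounded_connectedComponentIn_fixedPoints H hbm hbp
      (connectedComponentIn_subset {p | planeExt H p = p} q hpC) hp)

end StripExtension


/-- Lemma 4.1 of the paper: a homeomorphism `H` of the strip
preserving each boundary line extends to a homeomorphism `F` of the plane by the formula
`F(x,y) = H(x, y/|y|) + (0, y - y/|y|)` for `|y| ≥ 1` (orientation-preserving — here: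
isotopic to the identity — if `H` is orientation-preserving, i.e. increasing on the
lower boundary line), and every connected component of `Fix F` is either unbounded or a
connected component of `Fix H` contained in the open strip `ℝ × (-1,1)`. -/
theorem stmt14 (H : Strip ≃ₜ Strip)
    (hbm : ∀ z : Strip, z.2 = lo → (H z).2 = lo)
    (hbp : ∀ z : Strip, z.2 = hi → (H z).2 = hi) :
    ∃ F : (ℝ × ℝ) ≃ₜ (ℝ × ℝ),
      (∀ q : ℝ × ℝ, ∀ hq : q.2 ∈ II, F q = iota (H (q.1, ⟨q.2, hq⟩))) ∧
      (∀ q : ℝ × ℝ, 1 ≤ |q.2| → ∀ hs : q.2 / |q.2| ∈ II,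
        F q = iota (H (q.1, ⟨q.2 / |q.2|, hs⟩)) + ((0 : ℝ), q.2 - q.2 / |q.2|)) ∧
      ((∀ x y : ℝ, x < y → p1 (H (x, lo)) < p1 (H (y, lo))) → IsotopicToId F) ∧
      (∀ q : ℝ × ℝ, F q = q →
        (¬ Bornology.IsBounded (connectedComponentIn {p : ℝ × ℝ | F p = p} q) ∨
         ∃ z : Strip, H z = z ∧ iota z = q ∧ -1 < (z.2 : ℝ) ∧ (z.2 : ℝ) < 1 ∧
           connectedComponentIn {p : ℝ × ℝ | F p = p} q ⊆
             {p : ℝ × ℝ | -1 < p.2 ∧ p.2 < 1} ∧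
           connectedComponentIn {p : ℝ × ℝ | F p = p} q =
             iota '' connectedComponentIn {w : Strip | H w = w} z)) := by
  refine ⟨StripExtension.planeHomeomorph H hbm hbp, StripExtension.planeExt_of_mem H,
    StripExtension.planeExt_of_one_le_abs H, StripExtension.isotopicToId_planeHomeomorph H hbm hbp,
    StripExtension.connectedComponentIn_fixedPoints_unbounded_or_eq_image H hbm hbp⟩
end
end
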